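/- Suppose F is L-smooth with minimum F* and the iterates θ_{g+1} = θ_g − η r_g satisfy E[‖r_g − ∇F(θ_g)‖²] ≤ σ² and E[r_g] = ∇F(θ_g) + e_g with ‖e_g‖² ≤ σ². Then with step size η = 1/(L√G) and G ≥ 4, the average squared gradient norm satisfies (1/G)Σ_{g=0}^{G−1} E[‖∇F(θ_g)‖²] ≤ 4L(F(θ₀) − F*)/√G + 4(½ + 1/√G)σ². -/

import Mathlib

open MeasureTheory Finset

/-!
Smoothness gives the quadratic upper bound `F y ≤ F x + ⟪∇F x, y - x⟫ + L/2 ‖y - x‖²`. Applied to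
one step `x - η r` with `Lη ≤ 1`, the cross term `-η⟪∇F x, r⟫` is rewritten by polarization, and
the curvature term is absorbed by `‖r‖²`, leaving
`F (x - η r) ≤ F x - η/2 ‖∇F x‖² + η/2 ‖r - ∇F x‖²`. Taking expectations, the error term is at
most `η/2 σ²`; summing over `g < G` telescopes the `F`-values down to `F θ₀ - F*`, and
substituting `η = 1/(L√G)` gives the rate.
-/

open scoped RealInnerProductSpace

section LipschitzGradient

variable {E : Type*} [NormedAddCommGroup E] [InnerProductSpace ℝ E] [CompleteSpace E]
  {F : E → ℝ} {F' : E → E} {L : ℝ}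

theorem HasGradientAt.hasDerivAt_comp_add_smul {x v g : E} {t : ℝ}
    (h : HasGradientAt F g (x + t • v)) :
    HasDerivAt (fun s : ℝ => F (x + s • v)) ⟪g, v⟫ t := by
  have hline : HasDerivAt (fun s : ℝ => x + s • v) v t := by
    simpa using ((hasDerivAt_id t).smul_const v).const_add x
  have hcomp := h.hasFDerivAt.comp_hasDerivAt t hline
  simp only [InnerProductSpace.toDual_apply_apply] at hcomp
  exact hcomp

theorem le_add_inner_add_of_lipschitz_gradient (hgrad : ∀ x, HasGradientAt F (F' x) x)
    (hLip : ∀ x y, ‖F' x - F' y‖ ≤ L * ‖x - y‖) (x y : E) :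
    F y ≤ F x + ⟪F' x, y - x⟫ + L / 2 * ‖y - x‖ ^ 2 := by
  set v := y - x
  let g : ℝ → ℝ := fun t => F (x + t • v) - t * ⟪F' x, v⟫ - L / 2 * t ^ 2 * ‖v‖ ^ 2
  have hg : ∀ t, HasDerivAt g (⟪F' (x + t • v), v⟫ - ⟪F' x, v⟫ - L * t * ‖v‖ ^ 2) t := by
    intro t
    have hlin : HasDerivAt (fun s : ℝ => s * ⟪F' x, v⟫) ⟪F' x, v⟫ t := by
      simpa using (hasDerivAt_id t).mul_const ⟪F' x, v⟫
    have hquad : HasDerivAt (fun s : ℝ => L / 2 * s ^ 2 * ‖v‖ ^ 2) (L * t * ‖v‖ ^ 2) t := by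
      refine (((hasDerivAt_pow 2 t).const_mul (L / 2)).mul_const (‖v‖ ^ 2)).congr_deriv ?_
      push_cast; ring_nf
    exact (((hgrad _).hasDerivAt_comp_add_smul).sub hlin).sub hquad
  have hinner_le : ∀ t, 0 ≤ t → ⟪F' (x + t • v), v⟫ - ⟪F' x, v⟫ ≤ L * t * ‖v‖ ^ 2 := by
    intro t ht
    calc ⟪F' (x + t • v), v⟫ - ⟪F' x, v⟫ = ⟪F' (x + t • v) - F' x, v⟫ := (inner_sub_left ..).symm
      _ ≤ ‖F' (x + t • v) - F' x‖ * ‖v‖ := real_inner_le_norm _ _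
      _ ≤ L * ‖x + t • v - x‖ * ‖v‖ := by gcongr; exact hLip _ _
      _ = L * t * ‖v‖ ^ 2 := by
        rw [add_sub_cancel_left, norm_smul, Real.norm_of_nonneg ht]; ring
  have hanti : AntitoneOn g (Set.Ici 0) :=
    antitoneOn_of_hasDerivWithinAt_nonpos (convex_Ici 0)
      (fun t _ => (hg t).continuousAt.continuousWithinAt)
      (fun t _ => (hg t).hasDerivWithinAt)
      (fun t ht => by
        rw [interior_Ici] at ht
        linarith [hinner_le t (le_of_lt ht)])
  have h10 : g 1 ≤ g 0 := hanti (Set.mem_Ici.2 le_rfl) (Set.mem_Ici.2 zero_le_one) zero_le_one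
  norm_num [g, v] at h10
  linarith

theorem descent_step_le (hgrad : ∀ x, HasGradientAt F (F' x) x)
    (hLip : ∀ x y, ‖F' x - F' y‖ ≤ L * ‖x - y‖) {η : ℝ} (hη : 0 ≤ η) (hLη : L * η ≤ 1)
    (x r : E) :
    F (x - η • r) ≤ F x - η / 2 * ‖F' x‖ ^ 2 + η / 2 * ‖r - F' x‖ ^ 2 := by
  have hquad := le_add_inner_add_of_lipschitz_gradient hgrad hLip x (x - η • r)
  rw [sub_sub_cancel_left, inner_neg_right, real_inner_smul_right, norm_neg, norm_smul,
    Real.norm_of_nonneg hη] at hquad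
  have hpolar := norm_sub_sq_real r (F' x)
  rw [real_inner_comm] at hpolar
  have hcurv : 0 ≤ η * (1 - L * η) * ‖r‖ ^ 2 := by
    have : 0 ≤ 1 - L * η := by linarith
    positivity
  nlinarith

theorem integral_descent_step_le {Ω : Type*} [MeasurableSpace Ω] {μ : Measure Ω}
    (hgrad : ∀ x, HasGradientAt F (F' x) x) (hLip : ∀ x y, ‖F' x - F' y‖ ≤ L * ‖x - y‖)
    {η : ℝ} (hη : 0 ≤ η) (hLη : L * η ≤ 1) {X R : Ω → E}
    (hFX : Integrable (fun ω => F (X ω)) μ) (hFX' : Integrable (fun ω => F (X ω - η • R ω)) μ)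
    (hgradX : Integrable (fun ω => ‖F' (X ω)‖ ^ 2) μ)
    (herr : Integrable (fun ω => ‖R ω - F' (X ω)‖ ^ 2) μ) :
    η / 2 * ∫ ω, ‖F' (X ω)‖ ^ 2 ∂μ ≤
      ∫ ω, F (X ω) ∂μ - ∫ ω, F (X ω - η • R ω) ∂μ + η / 2 * ∫ ω, ‖R ω - F' (X ω)‖ ^ 2 ∂μ := by
  have hrhs := integral_add (hFX.sub hFX') (herr.const_mul (η / 2))
  rw [Pi.sub_def, integral_sub hFX hFX', integral_const_mul] at hrhs
  rw [← integral_const_mul, ← hrhs]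
  refine integral_mono (hgradX.const_mul _) ((hFX.sub hFX').add (herr.const_mul _)) fun ω => ?_
  linarith [descent_step_le hgrad hLip hη hLη (X ω) (R ω)]

theorem sum_integral_sq_norm_grad_le {Ω : Type*} [MeasurableSpace Ω] {μ : Measure Ω}
    [IsProbabilityMeasure μ]
    (hgrad : ∀ x, HasGradientAt F (F' x) x) (hLip : ∀ x y, ‖F' x - F' y‖ ≤ L * ‖x - y‖)
    {Fstar : ℝ} (hmin : ∀ x, Fstar ≤ F x) {η σ : ℝ} (hη : 0 ≤ η) (hLη : L * η ≤ 1)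
    {θ r : ℕ → Ω → E} {θ₀ : E} (hinit : ∀ ω, θ 0 ω = θ₀)
    (hupdate : ∀ g ω, θ (g + 1) ω = θ g ω - η • r g ω)
    (hint_err : ∀ g, Integrable (fun ω => ‖r g ω - F' (θ g ω)‖ ^ 2) μ)
    (hint_F : ∀ g, Integrable (fun ω => F (θ g ω)) μ)
    (hint_grad : ∀ g, Integrable (fun ω => ‖F' (θ g ω)‖ ^ 2) μ)
    (hvar : ∀ g, ∫ ω, ‖r g ω - F' (θ g ω)‖ ^ 2 ∂μ ≤ σ ^ 2) (G : ℕ) :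
    η / 2 * ∑ g ∈ range G, ∫ ω, ‖F' (θ g ω)‖ ^ 2 ∂μ ≤ F θ₀ - Fstar + G * (η / 2 * σ ^ 2) := by
  have hstep : ∀ g, η / 2 * ∫ ω, ‖F' (θ g ω)‖ ^ 2 ∂μ ≤
      ∫ ω, F (θ g ω) ∂μ - ∫ ω, F (θ (g + 1) ω) ∂μ + η / 2 * σ ^ 2 := by
    intro g
    have hnext := hint_F (g + 1)
    simp only [hupdate g] at hnext ⊢
    have := integral_descent_step_le hgrad hLip hη hLη (hint_F g) hnext (hint_grad g) (hint_err g)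
    have := mul_le_mul_of_nonneg_left (hvar g) (by positivity : 0 ≤ η / 2)
    linarith
  have hinit' : ∫ ω, F (θ 0 ω) ∂μ = F θ₀ := by simp [hinit]
  have hfinal : Fstar ≤ ∫ ω, F (θ G ω) ∂μ := by
    simpa using integral_mono (integrable_const Fstar) (hint_F G) fun ω => hmin (θ G ω)
  calc η / 2 * ∑ g ∈ range G, ∫ ω, ‖F' (θ g ω)‖ ^ 2 ∂μ
      ≤ ∑ g ∈ range G, (∫ ω, F (θ g ω) ∂μ - ∫ ω, F (θ (g + 1) ω) ∂μ + η / 2 * σ ^ 2) := by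
        rw [mul_sum]; exact sum_le_sum fun g _ => hstep g
    _ = ∫ ω, F (θ 0 ω) ∂μ - ∫ ω, F (θ G ω) ∂μ + G * (η / 2 * σ ^ 2) := by
        rw [sum_add_distrib, sum_range_sub', sum_const, card_range, nsmul_eq_mul]
    _ ≤ F θ₀ - Fstar + G * (η / 2 * σ ^ 2) := by rw [hinit']; linarith

end LipschitzGradient

theorem avg_bound_of_stepsize_sum_bound {L D σ S s : ℝ} (hL : 0 < L) (hs : 0 < s) (hD : 0 ≤ D)
    (h : 1 / (L * s) / 2 * S ≤ D + s ^ 2 * (1 / (L * s) / 2 * σ ^ 2)) :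
    1 / s ^ 2 * S ≤ 4 * L * D / s + 4 * (1 / 2 + 1 / s) * σ ^ 2 := by
  have hS : S ≤ 2 * L * s * D + s ^ 2 * σ ^ 2 := by
    have := mul_le_mul_of_nonneg_left h (by positivity : 0 ≤ 2 * L * s)
    field_simp at this
    linarith
  calc 1 / s ^ 2 * S ≤ 1 / s ^ 2 * (2 * L * s * D + s ^ 2 * σ ^ 2) := by gcongr
    _ = 2 * L * D / s + σ ^ 2 := by field_simp
    _ ≤ 4 * L * D / s + 4 * (1 / 2 + 1 / s) * σ ^ 2 := by
        have : 0 ≤ L * D / s := by positivity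
        have : 0 ≤ σ ^ 2 / s := by positivity
        linarith [sq_nonneg σ, show 4 * L * D / s = 2 * L * D / s + 2 * (L * D / s) by ring,
          show 4 * (1 / 2 + 1 / s) * σ ^ 2 = 2 * σ ^ 2 + 4 * (σ ^ 2 / s) by ring]

theorem elsa_convergence_general {E : Type*} [NormedAddCommGroup E] [InnerProductSpace ℝ E]
    [CompleteSpace E] {Ω : Type*} [MeasureSpace Ω]
    [IsProbabilityMeasure (volume : Measure Ω)]
    (F : E → ℝ) (F' : E → E) (L Fstar σ : ℝ) (G : ℕ) (η : ℝ)
    (θ : ℕ → Ω → E) (r : ℕ → Ω → E) (θ₀ : E)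
    (hL : 0 < L) (hG : 4 ≤ G)
    (hη : η = 1 / (L * Real.sqrt G))
    (hgrad : ∀ x, HasGradientAt F (F' x) x)
    (hLip : ∀ x y, ‖F' x - F' y‖ ≤ L * ‖x - y‖)
    (hmin : ∀ x, Fstar ≤ F x)
    (hinit : ∀ ω, θ 0 ω = θ₀)
    (hupdate : ∀ g ω, θ (g + 1) ω = θ g ω - η • r g ω)
    (hint₁ : ∀ g, Integrable (fun ω => ‖r g ω - F' (θ g ω)‖ ^ 2))
    (hint₃ : ∀ g, Integrable (fun ω => F (θ g ω)))
    (hint₄ : ∀ g, Integrable (fun ω => ‖F' (θ g ω)‖ ^ 2))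
    (hvar : ∀ g, ∫ ω, ‖r g ω - F' (θ g ω)‖ ^ 2 ≤ σ ^ 2) :
    (1 / (G : ℝ)) * ∑ g ∈ range G, ∫ ω, ‖F' (θ g ω)‖ ^ 2 ≤
      4 * L * (F θ₀ - Fstar) / Real.sqrt G +
        4 * (1 / 2 + 1 / Real.sqrt G) * σ ^ 2 := by
  set s := Real.sqrt G
  have hs : 1 ≤ s := Real.one_le_sqrt.2 (by exact_mod_cast (by omega : 1 ≤ G))
  have hη0 : 0 ≤ η := by rw [hη]; positivity
  have hLη : L * η ≤ 1 := by
    rw [hη, one_div, mul_inv, ← mul_assoc, mul_inv_cancel₀ hL.ne', one_mul]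
    exact inv_le_one_of_one_le₀ hs
  have hsum := sum_integral_sq_norm_grad_le hgrad hLip hmin hη0 hLη hinit hupdate hint₁ hint₃
    hint₄ hvar G
  have hGs : (G : ℝ) = s ^ 2 := (Real.sq_sqrt (Nat.cast_nonneg G)).symm
  rw [hη, hGs] at hsum
  rw [hGs]
  exact avg_bound_of_stepsize_sum_bound hL (zero_lt_one.trans_le hs) (sub_nonneg.2 (hmin θ₀)) hsum

theorem elsa_convergence {E : Type*} [NormedAddCommGroup E] [InnerProductSpace ℝ E]
    [CompleteSpace E] {Ω : Type*} [MeasureSpace Ω]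
    [IsProbabilityMeasure (volume : Measure Ω)]
    (F : E → ℝ) (F' : E → E) (L Fstar σ : ℝ) (G : ℕ) (η : ℝ)
    (θ : ℕ → Ω → E) (r : ℕ → Ω → E) (θ₀ : E)
    (hL : 0 < L) (hG : 4 ≤ G)
    (hη : η = 1 / (L * Real.sqrt G))
    (hgrad : ∀ x, HasGradientAt F (F' x) x)
    (hLip : ∀ x y, ‖F' x - F' y‖ ≤ L * ‖x - y‖)
    (hmin : ∀ x, Fstar ≤ F x)
    (hinit : ∀ ω, θ 0 ω = θ₀)
    (hupdate : ∀ g ω, θ (g + 1) ω = θ g ω - η • r g ω)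
    (hint₁ : ∀ g, Integrable (fun ω => ‖r g ω - F' (θ g ω)‖ ^ 2))
    (hint₂ : ∀ g, Integrable (fun ω => r g ω - F' (θ g ω)))
    (hint₃ : ∀ g, Integrable (fun ω => F (θ g ω)))
    (hint₄ : ∀ g, Integrable (fun ω => ‖F' (θ g ω)‖ ^ 2))
    (hvar : ∀ g, ∫ ω, ‖r g ω - F' (θ g ω)‖ ^ 2 ≤ σ ^ 2)
    (hbias : ∀ g, ‖∫ ω, (r g ω - F' (θ g ω))‖ ^ 2 ≤ σ ^ 2) :
    (1 / (G : ℝ)) * ∑ g ∈ range G, ∫ ω, ‖F' (θ g ω)‖ ^ 2 ≤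
      4 * L * (F θ₀ - Fstar) / Real.sqrt G +
        4 * (1 / 2 + 1 / Real.sqrt G) * σ ^ 2 :=
  elsa_convergence_general F F' L Fstar σ G η θ r θ₀ hL hG hη hgrad hLip hmin hinit hupdate hint₁
    hint₃ hint₄ hvar
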